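/- arXiv:2103.05778 — 2 statements merged into one kernel-verified Lean document; each statement's English description precedes it below -/
import Mathlib

section
/- In the setting of the previous statement, along any C^1 curve y₀ : [0,T] → ℝ^n, the thermodynamic quantities satisfy the first-law identity: (d/dt) E₀^⊥(y₀(t)) = Σ_{j=1}^n F₀^j(y₀(t)) · (d/dt) y₀^j(t) + T₀(y₀(t)) · (d/dt) S₀(y₀(t)), where F₀^j(y) = T₀(y) Σ_{λ=1}^r ∂_j log(ω_λ(y)), T₀(y) = (1/r) Σ_λ θ_*^λ ω_λ(y), S₀(y) = Σ_λ log(Σ_μ θ_*^μ ω_μ(y)/ω_λ(y)), and E₀^⊥(y) = Σ_λ θ_*^λ ω_λ(y). -/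
open Real Set

lemma clm_apply_eq_sum_single {n : ℕ} (L : (Fin n → ℝ) →L[ℝ] ℝ) (v : Fin n → ℝ) :
    L v = ∑ j, v j * L (Pi.single j 1) := by
  have hv : v = ∑ j, v j • (Pi.single j 1 : Fin n → ℝ) := by
    ext k
    simp [Pi.single_apply, Finset.sum_ite_eq]
  conv_lhs => rw [hv]
  simp [map_sum, smul_eq_mul]

/-- First-law identity along a C¹ curve:
d/dt E₀^⊥(y₀(t)) = Σⱼ F₀ʲ(y₀(t)) ẏ₀ʲ(t) + T₀(y₀(t)) d/dt S₀(y₀(t)). -/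
theorem first_law_leading_order
    (n r : ℕ) (hr : 1 ≤ r) (T : ℝ) (hT : 0 < T)
    (ω : Fin r → (Fin n → ℝ) → ℝ)
    (hω_smooth : ∀ lam, ContDiff ℝ (⊤ : ℕ∞) (ω lam))
    (hω_pos : ∀ lam y, 0 < ω lam y)
    (θ : Fin r → ℝ) (hθ : ∀ lam, 0 ≤ θ lam) (hθpos : ∃ lam, 0 < θ lam)
    (y₀ : ℝ → Fin n → ℝ) (y₀' : ℝ → Fin n → ℝ)
    (hy₀ : ∀ j, ∀ t ∈ Icc (0:ℝ) T, HasDerivAt (fun s => y₀ s j) (y₀' t j) t)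
    (T₀ S₀ E₀ : (Fin n → ℝ) → ℝ) (F₀ : Fin n → (Fin n → ℝ) → ℝ)
    (hT₀ : ∀ y, T₀ y = (1 / (r:ℝ)) * ∑ lam, θ lam * ω lam y)
    (hS₀ : ∀ y, S₀ y = ∑ lam, Real.log (∑ μ, θ μ * ω μ y / ω lam y))
    (hE₀ : ∀ y, E₀ y = ∑ lam, θ lam * ω lam y)
    (hF₀ : ∀ j y, F₀ j y =
      T₀ y * ∑ lam, deriv (fun s => Real.log (ω lam (Function.update y j s))) (y j)) :
    ∀ t ∈ Icc (0:ℝ) T,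
      deriv (fun s => E₀ (y₀ s)) t =
        (∑ j, F₀ j (y₀ t) * y₀' t j) + T₀ (y₀ t) * deriv (fun s => S₀ (y₀ s)) t := by
  intro t ht
  have hr0 : (r:ℝ) ≠ 0 := Nat.cast_ne_zero.mpr (by omega)
  have hωd : ∀ lam, Differentiable ℝ (ω lam) := fun lam => (hω_smooth lam).differentiable (by simp)
  have hP : ∀ z, 0 < ∑ lam, θ lam * ω lam z := by
    intro z
    obtain ⟨l0, hl0⟩ := hθpos
    exact Finset.sum_pos' (fun lam _ => mul_nonneg (hθ lam) (hω_pos lam z).le)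
      ⟨l0, Finset.mem_univ _, mul_pos hl0 (hω_pos l0 z)⟩
  set y := y₀ t with hy
  have hcurve : HasDerivAt y₀ (y₀' t) t := hasDerivAt_pi.mpr (fun j => hy₀ j t ht)
  set d : Fin r → ℝ := fun lam => fderiv ℝ (ω lam) y (y₀' t) with hd
  set pd : Fin r → Fin n → ℝ := fun lam j => fderiv ℝ (ω lam) y (Pi.single j 1) with hpd
  have hωc : ∀ lam, HasDerivAt (fun s => ω lam (y₀ s)) (d lam) t := fun lam =>
    ((hωd lam y).hasFDerivAt).comp_hasDerivAt t hcurve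
  -- derivative of E along the curve
  have hEc : HasDerivAt (fun s => E₀ (y₀ s)) (∑ lam, θ lam * d lam) t := by
    have h : HasDerivAt (fun s => ∑ lam, θ lam * ω lam (y₀ s)) (∑ lam, θ lam * d lam) t :=
      HasDerivAt.fun_sum (fun lam _ => (hωc lam).const_mul (θ lam))
    simpa only [hE₀] using h
  -- rewrite S₀ ∘ y₀
  have hSrw : (fun s => S₀ (y₀ s)) =
      fun s => (r:ℝ) * Real.log (∑ μ, θ μ * ω μ (y₀ s)) - ∑ lam, Real.log (ω lam (y₀ s)) := by
    funext s
    rw [hS₀]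
    have h1 : ∀ lam : Fin r, (∑ μ, θ μ * ω μ (y₀ s) / ω lam (y₀ s))
        = (∑ μ, θ μ * ω μ (y₀ s)) / ω lam (y₀ s) := by
      intro lam
      rw [Finset.sum_div]
    simp_rw [h1, Real.log_div (hP _).ne' (hω_pos _ _).ne']
    rw [Finset.sum_sub_distrib, Finset.sum_const, Finset.card_univ, Fintype.card_fin,
      nsmul_eq_mul]
  -- derivative of S along the curve
  have hSc : HasDerivAt (fun s => S₀ (y₀ s))
      ((r:ℝ) * ((∑ lam, θ lam * d lam) / (∑ lam, θ lam * ω lam y)) - ∑ lam, d lam / ω lam y) t := by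
    rw [hSrw]
    have h1 : HasDerivAt (fun s => ∑ μ, θ μ * ω μ (y₀ s)) (∑ lam, θ lam * d lam) t :=
      HasDerivAt.fun_sum (fun lam _ => (hωc lam).const_mul (θ lam))
    have h2 : HasDerivAt (fun s => Real.log (∑ μ, θ μ * ω μ (y₀ s)))
        ((∑ lam, θ lam * d lam) / (∑ lam, θ lam * ω lam y)) t := h1.log (hP y).ne'
    have h3 : HasDerivAt (fun s => ∑ lam, Real.log (ω lam (y₀ s))) (∑ lam, d lam / ω lam y) t :=
      HasDerivAt.fun_sum (fun lam _ => (hωc lam).log (hω_pos lam y).ne')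
    exact (h2.const_mul (r:ℝ)).sub h3
  -- partial derivative of log ω along coordinate update
  have hlogpd : ∀ lam j, deriv (fun s => Real.log (ω lam (Function.update y j s))) (y j)
      = pd lam j / ω lam y := by
    intro lam j
    have h0 : HasDerivAt (fun s => Function.update y j s) (Pi.single j (1:ℝ)) (y j) :=
      hasDerivAt_update y j (y j)
    have hf : HasFDerivAt (ω lam) (fderiv ℝ (ω lam) y) (Function.update y j (y j)) := by
      simpa [Function.update_eq_self] using (hωd lam y).hasFDerivAt
    have h1 : HasDerivAt (fun s => ω lam (Function.update y j s)) (pd lam j) (y j) :=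
      hf.comp_hasDerivAt (y j) h0
    have h3 := h1.log (by simpa [Function.update_eq_self] using (hω_pos lam y).ne')
    rw [h3.deriv, Function.update_eq_self]
  -- linearity: d lam = ∑ j, y₀' t j * pd lam j
  have hlin : ∀ lam, d lam = ∑ j, y₀' t j * pd lam j := fun lam =>
    clm_apply_eq_sum_single (fderiv ℝ (ω lam) y) (y₀' t)
  -- put everything together
  rw [hEc.deriv, hSc.deriv]
  simp only [hF₀, hT₀, hlogpd]
  have key : ∑ j, (∑ lam, pd lam j / ω lam y) * y₀' t j = ∑ lam, d lam / ω lam y := by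
    simp_rw [Finset.sum_mul]
    rw [Finset.sum_comm]
    refine Finset.sum_congr rfl fun lam _ => ?_
    rw [hlin lam, Finset.sum_div]
    exact Finset.sum_congr rfl fun j _ => by ring
  have e1 : ∑ j, ((1/(r:ℝ)) * (∑ lam, θ lam * ω lam y) * ∑ lam, pd lam j / ω lam y) * y₀' t j
      = (1/(r:ℝ)) * (∑ lam, θ lam * ω lam y) * ∑ lam, d lam / ω lam y := by
    rw [← key]
    conv_rhs => rw [Finset.mul_sum]
    exact Finset.sum_congr rfl fun j _ => by ring
  rw [e1]
  have hPy : (∑ lam, θ lam * ω lam y) ≠ 0 := (hP y).ne'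
  field_simp
  ring
end

section
/- Let f : [0,T] → ℝ be continuous and nonnegative, and suppose there exist constants A, B ≥ 0 such that for all t ∈ [0,T], f(t) ≤ A + B ∫_0^t ∫_0^σ f(s) ds dσ. Then f(t) ≤ A·exp(B·T²) for all t ∈ [0,T]. -/
open Real Set intervalIntegral

/-- Iterated-integral Gronwall inequality: if f(t) ≤ A + B ∫₀ᵗ∫₀^σ f(s) ds dσ
on [0,T], then f(t) ≤ A·exp(B·T²). -/
theorem gronwall_iterated_integral
    (T A B : ℝ) (hT : 0 < T) (hA : 0 ≤ A) (hB : 0 ≤ B)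
    (f : ℝ → ℝ) (hf_cont : ContinuousOn f (Icc (0:ℝ) T))
    (hf_nonneg : ∀ t ∈ Icc (0:ℝ) T, 0 ≤ f t)
    (hbound : ∀ t ∈ Icc (0:ℝ) T,
      f t ≤ A + B * ∫ σ in (0:ℝ)..t, ∫ s in (0:ℝ)..σ, f s) :
    ∀ t ∈ Icc (0:ℝ) T, f t ≤ A * Real.exp (B * T ^ 2) := by
  -- handle B = 0 separately
  rcases eq_or_lt_of_le hB with hB0 | hBpos
  · intro t ht
    have h1 := hbound t ht
    rw [← hB0] at h1 ⊢
    simp only [zero_mul, add_zero] at h1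
    simpa using h1
  -- extend f continuously to all of ℝ via projection onto [0, T]
  set g : ℝ → ℝ := fun t => f (projIcc 0 T hT.le t) with hg_def
  have hg_cont : Continuous g := (hf_cont.restrict).comp continuous_projIcc
  have hg_eq : ∀ t ∈ Icc (0:ℝ) T, g t = f t := by
    intro t ht
    simp [hg_def, projIcc_of_mem hT.le ht]
  have hg_nonneg : ∀ t, 0 ≤ g t := fun t => hf_nonneg _ (projIcc 0 T hT.le t).2
  set F : ℝ → ℝ := fun t => ∫ s in (0:ℝ)..t, g s with hF_def
  have hF_deriv : ∀ x : ℝ, HasDerivAt F (g x) x := fun x =>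
    intervalIntegral.integral_hasDerivAt_right (hg_cont.intervalIntegrable 0 x)
      (hg_cont.stronglyMeasurable.stronglyMeasurableAtFilter) hg_cont.continuousAt
  have hFcont : Continuous F :=
    continuous_iff_continuousAt.mpr fun x => (hF_deriv x).continuousAt
  have hF_nonneg : ∀ x : ℝ, 0 ≤ x → 0 ≤ F x := fun x hx =>
    intervalIntegral.integral_nonneg hx fun s _ => hg_nonneg s
  have hF_mono : ∀ σ x : ℝ, 0 ≤ σ → σ ≤ x → F σ ≤ F x := by
    intro σ x h0 hσx
    have hsplit : F x = F σ + ∫ s in σ..x, g s :=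
      (intervalIntegral.integral_add_adjacent_intervals
        (hg_cont.intervalIntegrable 0 σ) (hg_cont.intervalIntegrable σ x)).symm
    have : 0 ≤ ∫ s in σ..x, g s :=
      intervalIntegral.integral_nonneg hσx fun s _ => hg_nonneg s
    linarith
  -- the iterated bound gives a single-integral bound: g t ≤ A + (B*T) * F t
  have hKey : ∀ t ∈ Icc (0:ℝ) T, g t ≤ A + (B * T) * F t := by
    intro t ht
    have h0t : (0:ℝ) ≤ t := ht.1
    have hinner : ∀ σ ∈ Icc (0:ℝ) t, (∫ s in (0:ℝ)..σ, f s) = F σ := by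
      intro σ hσ
      refine intervalIntegral.integral_congr fun s hs => ?_
      rw [uIcc_of_le hσ.1] at hs
      exact (hg_eq s ⟨hs.1, hs.2.trans (hσ.2.trans ht.2)⟩).symm
    have hcongr : (∫ σ in (0:ℝ)..t, ∫ s in (0:ℝ)..σ, f s) = ∫ σ in (0:ℝ)..t, F σ := by
      refine intervalIntegral.integral_congr fun σ hσ => ?_
      rw [uIcc_of_le h0t] at hσ
      exact hinner σ hσ
    have houter : (∫ σ in (0:ℝ)..t, F σ) ≤ ∫ σ in (0:ℝ)..t, F t := by
      refine intervalIntegral.integral_mono_on h0t (hFcont.intervalIntegrable 0 t)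
        (intervalIntegrable_const) fun σ hσ => hF_mono σ t hσ.1 hσ.2
    have hconst : (∫ σ in (0:ℝ)..t, F t) = t * F t := by simp
    have hstep : (∫ σ in (0:ℝ)..t, ∫ s in (0:ℝ)..σ, f s) ≤ T * F t := by
      rw [hcongr]
      calc (∫ σ in (0:ℝ)..t, F σ) ≤ t * F t := by rw [← hconst]; exact houter
        _ ≤ T * F t := mul_le_mul_of_nonneg_right ht.2 (hF_nonneg t h0t)
    have := hbound t ht
    rw [hg_eq t ht]
    calc f t ≤ A + B * (∫ σ in (0:ℝ)..t, ∫ s in (0:ℝ)..σ, f s) := this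
      _ ≤ A + B * (T * F t) := by
          have := mul_le_mul_of_nonneg_left hstep hB
          linarith
      _ = A + (B * T) * F t := by ring
  -- apply Gronwall's inequality (derivative form) to F
  set K : ℝ := B * T with hK_def
  have hKpos : 0 < K := mul_pos hBpos hT
  have hF_bound : ∀ x ∈ Icc (0:ℝ) T, ‖F x‖ ≤ gronwallBound 0 K A (x - 0) := by
    refine norm_le_gronwallBound_of_norm_deriv_right_le hFcont.continuousOn
      (fun x _ => (hF_deriv x).hasDerivWithinAt) (by simp [hF_def]) ?_
    intro x hx
    have hx' : x ∈ Icc (0:ℝ) T := ⟨hx.1, hx.2.le⟩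
    rw [Real.norm_of_nonneg (hg_nonneg x), Real.norm_of_nonneg (hF_nonneg x hx.1)]
    exact (hKey x hx').trans_eq (by ring)
  intro t ht
  have hFt : F t ≤ A / K * (Real.exp (K * t) - 1) := by
    have h := hF_bound t ht
    rw [Real.norm_of_nonneg (hF_nonneg t ht.1), gronwallBound_of_K_ne_0 hKpos.ne'] at h
    simpa using h
  have h1 : f t ≤ A + K * F t := by
    have := hKey t ht
    rw [hg_eq t ht] at this
    exact this
  have h2 : A + K * (A / K * (Real.exp (K * t) - 1)) = A * Real.exp (K * t) := by
    have hK0 : K ≠ 0 := hKpos.ne'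
    field_simp
    ring
  have h3 : f t ≤ A * Real.exp (K * t) := by
    calc f t ≤ A + K * F t := h1
      _ ≤ A + K * (A / K * (Real.exp (K * t) - 1)) := by nlinarith
      _ = A * Real.exp (K * t) := h2
  calc f t ≤ A * Real.exp (K * t) := h3
    _ ≤ A * Real.exp (B * T ^ 2) := by
        apply mul_le_mul_of_nonneg_left _ hA
        apply Real.exp_le_exp.mpr
        have : K * t ≤ K * T := mul_le_mul_of_nonneg_left ht.2 hKpos.le
        nlinarith
end
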